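/- Fix c > 0 and define the holomorphic curve φ : 𝔻 → ℂ² by φ(z) = (c·e^{πz}, e^{−πz}). Then, writing x = Re z and t = c²·e^{4πx}: (i) σ(z) = (1/2)·log(π²·(c²e^{2πx} + e^{−2πx})); (ii) Sφ(z) = 4π²t/(t+1)² − (π²/2)·((t−1)/(t+1))²; (iii) Δσ(z) = 8π²t/(t+1)²; and (iv) if c² ≥ (5 + 2√6)·e^{4π}, then |Sφ(z)| + (3/4)·Δσ(z) = π²/2 for every z ∈ 𝔻, i.e., equality holds everywhere in the injectivity criterion with constant Nehari function p ≡ π²/4. -/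

import Mathlib

open Set Metric Complex

noncomputable section

/-- Wirtinger derivative `∂u = (u_x - i·u_y)/2` of a complex-valued function on `ℂ`. -/
def wirt (u : ℂ → ℂ) (z : ℂ) : ℂ :=
  (lineDeriv ℝ u z 1 - Complex.I * lineDeriv ℝ u z Complex.I) / 2

/-- Wirtinger derivative of a real-valued function, viewed as a complex number. -/
def wirtR (u : ℂ → ℝ) (z : ℂ) : ℂ :=
  (((lineDeriv ℝ u z 1 : ℝ) : ℂ) - Complex.I * ((lineDeriv ℝ u z Complex.I : ℝ) : ℂ)) / 2

/-- The Schwarzian `Sφ = 2(∂(∂σ) - (∂σ)²)` built from the conformal factor `σ`. -/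
def schwarzianOfSigma (σ : ℂ → ℝ) (z : ℂ) : ℂ :=
  2 * (wirt (wirtR σ) z - (wirtR σ z) ^ 2)

/-- The Laplacian `Δu = u_xx + u_yy` of a real-valued function on `ℂ`. -/
def lap (u : ℂ → ℝ) (z : ℂ) : ℝ :=
  lineDeriv ℝ (fun w => lineDeriv ℝ u w 1) z 1 +
    lineDeriv ℝ (fun w => lineDeriv ℝ u w Complex.I) z Complex.I

/-- `σ(z) = (1/2)·log(|f₁'(z)|² + ⋯ + |f_n'(z)|²)` for a holomorphic curve `φ`. -/
def curveSigma {n : ℕ} (φ : ℂ → EuclideanSpace ℂ (Fin n)) (z : ℂ) : ℝ :=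
  (1 / 2) * Real.log (‖deriv φ z‖ ^ 2)

open Real in
def Gf (c x : ℝ) : ℝ := c ^ 2 * rexp (2 * π * x) + rexp (-(2 * π * x))
open Real in
def Df (c x : ℝ) : ℝ := c ^ 2 * rexp (2 * π * x) - rexp (-(2 * π * x))
open Real in
def Ff (c x : ℝ) : ℝ := (1 / 2) * Real.log (π ^ 2 * Gf c x)
open Real in
def F1 (c x : ℝ) : ℝ := π * Df c x / Gf c x
open Real in
def F2 (c x : ℝ) : ℝ := 8 * π ^ 2 * c ^ 2 / (Gf c x) ^ 2

section AuxLemmas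
open Real

lemma Gpos (c x : ℝ) : 0 < Gf c x := by unfold Gf; positivity

lemma expE (x : ℝ) : rexp (2 * π * x) * rexp (-(2 * π * x)) = 1 := by
  rw [← Real.exp_add]; simp

lemma GD (c x : ℝ) : Gf c x ^ 2 - Df c x ^ 2 = 4 * c ^ 2 := by
  unfold Gf Df; linear_combination (4 * c ^ 2) * expE x

lemma hG (c x : ℝ) : HasDerivAt (Gf c) (2 * π * Df c x) x := by
  unfold Gf Df
  have h1 : HasDerivAt (fun x : ℝ => rexp (2 * π * x)) (2 * π * rexp (2 * π * x)) x := by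
    simpa [mul_comm] using (((hasDerivAt_id x).const_mul (2 * π)).exp)
  have h2 : HasDerivAt (fun x : ℝ => rexp (-(2 * π * x))) (-(2 * π) * rexp (-(2 * π * x))) x := by
    simpa [mul_comm] using ((((hasDerivAt_id x).const_mul (2 * π)).neg).exp)
  refine ((h1.const_mul (c ^ 2)).add h2).congr_deriv ?_
  ring

lemma hD (c x : ℝ) : HasDerivAt (Df c) (2 * π * Gf c x) x := by
  unfold Gf Df
  have h1 : HasDerivAt (fun x : ℝ => rexp (2 * π * x)) (2 * π * rexp (2 * π * x)) x := by
    simpa [mul_comm] using (((hasDerivAt_id x).const_mul (2 * π)).exp)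
  have h2 : HasDerivAt (fun x : ℝ => rexp (-(2 * π * x))) (-(2 * π) * rexp (-(2 * π * x))) x := by
    simpa [mul_comm] using ((((hasDerivAt_id x).const_mul (2 * π)).neg).exp)
  refine ((h1.const_mul (c ^ 2)).sub h2).congr_deriv ?_
  ring

lemma hFf (c x : ℝ) : HasDerivAt (Ff c) (F1 c x) x := by
  unfold Ff F1
  have hπ : (0:ℝ) < π := Real.pi_pos
  have hne : π ^ 2 * Gf c x ≠ 0 := (mul_pos (by positivity) (Gpos c x)).ne'
  have := (((hG c x).const_mul (π ^ 2)).log hne).const_mul (1/2 : ℝ)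
  refine this.congr_deriv ?_
  field_simp [(Gpos c x).ne']

lemma hF1 (c x : ℝ) : HasDerivAt (F1 c) (F2 c x) x := by
  unfold F1 F2
  have := ((hD c x).const_mul π).div (hG c x) (Gpos c x).ne'
  refine this.congr_deriv ?_
  have := GD c x
  field_simp [(Gpos c x).ne']
  ring_nf
  nlinarith [this, sq_nonneg (Gf c x)]

lemma lineDeriv_re_one (h h' : ℝ → ℝ) (hh : ∀ x, HasDerivAt h (h' x) x) (z : ℂ) :
    lineDeriv ℝ (fun w : ℂ => h w.re) z 1 = h' z.re := by
  have : (fun t : ℝ => h ((z + t • (1:ℂ)).re)) = fun t : ℝ => h (z.re + t) := by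
    funext t; simp
  rw [lineDeriv, this]
  have : HasDerivAt (fun t : ℝ => h (z.re + t)) (h' (z.re + 0) * 1) 0 :=
    (hh (z.re + 0)).comp 0 ((hasDerivAt_id (0:ℝ)).const_add z.re)
  simpa using this.deriv

lemma lineDeriv_re_I (h : ℝ → ℝ) (z : ℂ) :
    lineDeriv ℝ (fun w : ℂ => h w.re) z Complex.I = 0 := by
  have : (fun t : ℝ => h ((z + t • Complex.I).re)) = fun _ : ℝ => h z.re := by
    funext t; simp
  rw [lineDeriv, this, deriv_const]

lemma lineDeriv_re_one_C (h h' : ℝ → ℝ) (hh : ∀ x, HasDerivAt h (h' x) x) (z : ℂ) :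
    lineDeriv ℝ (fun w : ℂ => ((h w.re : ℝ) : ℂ) / 2) z 1 = ((h' z.re : ℝ) : ℂ) / 2 := by
  have he : (fun t : ℝ => ((h ((z + t • (1:ℂ)).re) : ℝ) : ℂ) / 2)
      = fun t : ℝ => ((h (z.re + t) : ℝ) : ℂ) / 2 := by
    funext t; simp
  rw [lineDeriv, he]
  have h0 : HasDerivAt (fun t : ℝ => h (z.re + t)) (h' (z.re + 0) * 1) 0 :=
    (hh (z.re + 0)).comp 0 ((hasDerivAt_id (0:ℝ)).const_add z.re)
  have := (h0.ofReal_comp).div_const (2:ℂ)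
  simpa using this.deriv

lemma lineDeriv_re_I_C (h : ℝ → ℝ) (z : ℂ) :
    lineDeriv ℝ (fun w : ℂ => ((h w.re : ℝ) : ℂ) / 2) z Complex.I = 0 := by
  have : (fun t : ℝ => ((h ((z + t • Complex.I).re) : ℝ) : ℂ) / 2)
      = fun _ : ℝ => ((h z.re : ℝ) : ℂ) / 2 := by
    funext t; simp
  rw [lineDeriv, this, deriv_const]

lemma exp4 (x : ℝ) : rexp (4 * π * x) = rexp (2 * π * x) ^ 2 := by
  rw [sq, ← Real.exp_add]; ring_nf

lemma conv_denom (c x : ℝ) : c ^ 2 * rexp (4 * π * x) + 1 = rexp (2 * π * x) * Gf c x := by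
  rw [exp4]; unfold Gf; linear_combination -expE x

lemma conv_num (c x : ℝ) : c ^ 2 * rexp (4 * π * x) - 1 = rexp (2 * π * x) * Df c x := by
  rw [exp4]; unfold Df; linear_combination expE x

lemma conv_lap (c x : ℝ) : F2 c x =
    8 * π ^ 2 * (c ^ 2 * rexp (4 * π * x)) / (c ^ 2 * rexp (4 * π * x) + 1) ^ 2 := by
  rw [conv_denom, exp4]; unfold F2
  have hG := (Gpos c x).ne'
  have hE : rexp (2 * π * x) ≠ 0 := (Real.exp_pos _).ne'
  field_simp

lemma conv_S (c x : ℝ) : F2 c x / 2 - F1 c x ^ 2 / 2 =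
    4 * π ^ 2 * (c ^ 2 * rexp (4 * π * x)) / (c ^ 2 * rexp (4 * π * x) + 1) ^ 2 -
      (π ^ 2 / 2) * ((c ^ 2 * rexp (4 * π * x) - 1) / (c ^ 2 * rexp (4 * π * x) + 1)) ^ 2 := by
  rw [conv_denom, conv_num, exp4]; unfold F1 F2
  have hG := (Gpos c x).ne'
  have hE : rexp (2 * π * x) ≠ 0 := (Real.exp_pos _).ne'
  field_simp
  ring

end AuxLemmas

open Real in
/-- **Example 1.** For `φ(z) = (c·e^{πz}, e^{−πz})` on `𝔻`, writing `x = Re z` and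
`t = c²e^{4πx}`: (i) `σ = (1/2)log(π²(c²e^{2πx} + e^{−2πx}))`;
(ii) `Sφ = 4π²t/(t+1)² − (π²/2)((t−1)/(t+1))²`; (iii) `Δσ = 8π²t/(t+1)²`; and
(iv) if `c² ≥ (5 + 2√6)e^{4π}`, then `|Sφ| + (3/4)Δσ = π²/2` on all of `𝔻`, i.e.
equality holds everywhere in the criterion with `p ≡ π²/4`. -/
theorem example_one (c : ℝ) (hc : 0 < c)
    (φ : ℂ → EuclideanSpace ℂ (Fin 2))
    (hφdef : ∀ z : ℂ, φ z = (EuclideanSpace.equiv (Fin 2) ℂ).symm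
      ![(c : ℂ) * Complex.exp ((π : ℂ) * z), Complex.exp (-((π : ℂ) * z))]) :
    (∀ z ∈ ball (0 : ℂ) 1,
      curveSigma φ z =
        (1 / 2) * Real.log (π ^ 2 *
          (c ^ 2 * Real.exp (2 * π * z.re) + Real.exp (-(2 * π * z.re))))) ∧
    (∀ z ∈ ball (0 : ℂ) 1,
      schwarzianOfSigma (curveSigma φ) z =
        ((4 * π ^ 2 * (c ^ 2 * Real.exp (4 * π * z.re)) /
            (c ^ 2 * Real.exp (4 * π * z.re) + 1) ^ 2 -
          (π ^ 2 / 2) * ((c ^ 2 * Real.exp (4 * π * z.re) - 1) /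
            (c ^ 2 * Real.exp (4 * π * z.re) + 1)) ^ 2 : ℝ) : ℂ)) ∧
    (∀ z ∈ ball (0 : ℂ) 1,
      lap (curveSigma φ) z =
        8 * π ^ 2 * (c ^ 2 * Real.exp (4 * π * z.re)) /
          (c ^ 2 * Real.exp (4 * π * z.re) + 1) ^ 2) ∧
    (c ^ 2 ≥ (5 + 2 * Real.sqrt 6) * Real.exp (4 * π) →
      ∀ z ∈ ball (0 : ℂ) 1,
        ‖schwarzianOfSigma (curveSigma φ) z‖ +
          (3 / 4) * lap (curveSigma φ) z = π ^ 2 / 2) := by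
  -- norm of the derivative
  have hnorm : ∀ z : ℂ, ‖deriv φ z‖ ^ 2 = π ^ 2 * Gf c z.re := by
    intro z
    have hv : HasDerivAt (fun z : ℂ => (![(c : ℂ) * Complex.exp ((π : ℂ) * z),
        Complex.exp (-((π : ℂ) * z))] : Fin 2 → ℂ))
        ![(c : ℂ) * (π : ℂ) * Complex.exp ((π : ℂ) * z),
          -((π : ℂ) * Complex.exp (-((π : ℂ) * z)))] z := by
      rw [hasDerivAt_pi]
      intro i
      fin_cases i
      · simpa [mul_comm, mul_assoc, mul_left_comm] using
          (((hasDerivAt_id z).const_mul (π : ℂ)).cexp).const_mul (c : ℂ)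
      · simpa [mul_comm, mul_assoc, mul_left_comm] using
          (((hasDerivAt_id z).const_mul (π : ℂ)).neg).cexp
    have hd : HasDerivAt φ ((EuclideanSpace.equiv (Fin 2) ℂ).symm
        ![(c : ℂ) * (π : ℂ) * Complex.exp ((π : ℂ) * z),
          -((π : ℂ) * Complex.exp (-((π : ℂ) * z)))]) z := by
      have hφ : φ = fun z => (EuclideanSpace.equiv (Fin 2) ℂ).symm
        ![(c : ℂ) * Complex.exp ((π : ℂ) * z), Complex.exp (-((π : ℂ) * z))] := funext hφdef
      rw [hφ]
      exact ((EuclideanSpace.equiv (Fin 2) ℂ).symm.hasFDerivAt).comp_hasDerivAt z hv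
    rw [hd.deriv, EuclideanSpace.norm_eq, Real.sq_sqrt (by positivity)]
    simp only [Fin.sum_univ_two]
    unfold Gf
    simp [Complex.norm_exp]
    have h1 : rexp (2 * π * z.re) = rexp (π * z.re) * rexp (π * z.re) := by
      rw [← Real.exp_add]; ring_nf
    have h2 : rexp (-(2 * π * z.re)) = rexp (-(π * z.re)) * rexp (-(π * z.re)) := by
      rw [← Real.exp_add]; ring_nf
    rw [h1, h2, abs_of_pos hc, abs_of_pos Real.pi_pos]
    ring
  have hσ : curveSigma φ = fun w : ℂ => Ff c w.re := by
    funext w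
    unfold curveSigma Ff
    rw [hnorm w]
  -- wirtR of σ
  have hw : wirtR (curveSigma φ) = fun w : ℂ => ((F1 c w.re : ℝ) : ℂ) / 2 := by
    funext w
    unfold wirtR
    rw [hσ, lineDeriv_re_one (Ff c) (F1 c) (hFf c) w, lineDeriv_re_I (Ff c) w]
    push_cast
    ring
  -- wirt of wirtR σ
  have hww : ∀ z : ℂ, wirt (wirtR (curveSigma φ)) z = ((F2 c z.re : ℝ) : ℂ) / 4 := by
    intro z
    unfold wirt
    rw [hw, lineDeriv_re_one_C (F1 c) (F2 c) (hF1 c) z, lineDeriv_re_I_C (F1 c) z]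
    push_cast
    ring
  -- Schwarzian
  have hS : ∀ z : ℂ, schwarzianOfSigma (curveSigma φ) z
      = ((F2 c z.re / 2 - F1 c z.re ^ 2 / 2 : ℝ) : ℂ) := by
    intro z
    unfold schwarzianOfSigma
    rw [hww z, show wirtR (curveSigma φ) z = ((F1 c z.re : ℝ) : ℂ) / 2 from by rw [hw]]
    push_cast
    ring
  -- Laplacian
  have hlap : ∀ z : ℂ, lap (curveSigma φ) z = F2 c z.re := by
    intro z
    unfold lap
    have e1 : (fun w : ℂ => lineDeriv ℝ (curveSigma φ) w 1) = fun w : ℂ => F1 c w.re := by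
      funext w
      rw [hσ, lineDeriv_re_one (Ff c) (F1 c) (hFf c) w]
    have e2 : (fun w : ℂ => lineDeriv ℝ (curveSigma φ) w Complex.I) = fun _ : ℂ => (0:ℝ) := by
      funext w
      rw [hσ, lineDeriv_re_I (Ff c) w]
    rw [e1, e2, lineDeriv_re_one (F1 c) (F2 c) (hF1 c) z]
    simp [lineDeriv]
  refine ⟨?_, ?_, ?_, ?_⟩
  · intro z _
    rw [hσ]; rfl
  · intro z _
    rw [hS z, conv_S c z.re]
  · intro z _
    rw [hlap z, conv_lap c z.re]
  · intro hcc z hz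
    have hx : |z.re| < 1 := lt_of_le_of_lt (Complex.abs_re_le_norm z) (by simpa using hz)
    set x := z.re with hxdef
    -- t ≥ 5 + 2√6
    have hs6 : Real.sqrt 6 ^ 2 = 6 := Real.sq_sqrt (by norm_num)
    have hs6n : 0 ≤ Real.sqrt 6 := Real.sqrt_nonneg 6
    have hexp1 : (1:ℝ) ≤ rexp (4 * π) * rexp (4 * π * x) := by
      rw [← Real.exp_add]
      apply Real.one_le_exp
      have : -1 < x := (abs_lt.mp hx).1
      nlinarith [Real.pi_pos]
    have ht : 5 + 2 * Real.sqrt 6 ≤ c ^ 2 * rexp (4 * π * x) := by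
      have h1 : (5 + 2 * Real.sqrt 6) * (rexp (4 * π) * rexp (4 * π * x))
          ≤ c ^ 2 * rexp (4 * π * x) := by
        rw [← mul_assoc]
        exact mul_le_mul_of_nonneg_right hcc (Real.exp_pos _).le
      nlinarith [hexp1, hs6n]
    -- D² ≥ 8c²
    have hEpos : (0:ℝ) < rexp (2 * π * x) := Real.exp_pos _
    have hD8 : 8 * c ^ 2 ≤ Df c x ^ 2 := by
      have h1 : (c ^ 2 * rexp (4 * π * x) - 1) ^ 2 ≥ 8 * (c ^ 2 * rexp (4 * π * x)) := by
        nlinarith [ht, hs6, hs6n]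
      rw [conv_num, exp4] at h1
      nlinarith [h1, mul_pos hEpos hEpos]
    have hGpos := Gpos c x
    -- S ≤ 0
    have hSeq : F2 c x / 2 - F1 c x ^ 2 / 2
        = π ^ 2 * (8 * c ^ 2 - Df c x ^ 2) / (2 * Gf c x ^ 2) := by
      unfold F1 F2
      field_simp
    have hSle : F2 c x / 2 - F1 c x ^ 2 / 2 ≤ 0 := by
      rw [hSeq]
      apply div_nonpos_of_nonpos_of_nonneg
      · nlinarith [hD8, sq_nonneg π]
      · positivity
    rw [hS z, hlap z]
    rw [Complex.norm_real, Real.norm_eq_abs, abs_of_nonpos hSle]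
    unfold F1 F2
    have hGne := hGpos.ne'
    have hGD := GD c x
    rw [← hxdef]
    field_simp
    linear_combination (-4) * hGD

end
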